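/- arXiv:2605.24445 — 5 statements merged into one kernel-verified Lean document; each statement's English description precedes it below -/
import Mathlib

section
/- Let Y be a random Hermitian m×m matrix with E[Y] = 0 and -R·I ⪯ Y ⪯ R·I almost surely for some R > 0. Then for all real s, E[exp(sY)] ⪯ cosh(sR)·I ⪯ exp(s²R²/2)·I. In particular, ‖E[exp(sY)]‖_op ≤ exp(s²R²/2) and E[tr exp(sY)] ≤ m·exp(s²R²/2). -/
open MeasureTheory NormedSpace
open scoped ComplexOrder

open scoped InnerProductSpace

set_option maxHeartbeats 1000000
set_option synthInstance.maxHeartbeats 1000000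

namespace HoeffAux

open Matrix

variable {m : ℕ}

/-- scalar Hoeffding bound -/
lemma scalar_bound {R s x : ℝ} (hR : 0 < R) (h1 : -R ≤ x) (h2 : x ≤ R) :
    Real.exp (s * x) ≤ Real.cosh (s * R) + Real.sinh (s * R) / R * x := by
  set θ : ℝ := (x + R) / (2 * R) with hθ
  have hθ0 : 0 ≤ θ := div_nonneg (by linarith) (by linarith)
  have hθ1 : 0 ≤ 1 - θ := by
    have : θ ≤ 1 := by
      rw [hθ, div_le_one (by linarith)]; linarith
    linarith
  have hc := convexOn_exp.2 (Set.mem_univ (s * R)) (Set.mem_univ (-(s * R))) hθ0 hθ1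
    (by ring)
  simp only [smul_eq_mul] at hc
  have hx : θ * (s * R) + (1 - θ) * (-(s * R)) = s * x := by
    rw [hθ]; field_simp; ring
  rw [hx] at hc
  refine hc.trans (le_of_eq ?_)
  rw [Real.cosh_eq, Real.sinh_eq]
  rw [hθ]; field_simp; ring

/-- upper eigenvalue bound -/
lemma eig_le {A : Matrix (Fin m) (Fin m) ℂ} (hA : A.IsHermitian) {c : ℝ}
    (h : ((c : ℂ) • (1 : Matrix (Fin m) (Fin m) ℂ) - A).PosSemidef) (i : Fin m) :
    hA.eigenvalues i ≤ c := by
  have h2 := h.dotProduct_mulVec_nonneg ⇑(hA.eigenvectorBasis i)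
  have hvv : dotProduct (star ⇑(hA.eigenvectorBasis i)) ⇑(hA.eigenvectorBasis i) = 1 := by
    have hn := hA.eigenvectorBasis.orthonormal.1 i
    have h1 : (⟪hA.eigenvectorBasis i, hA.eigenvectorBasis i⟫_ℂ) = 1 := by
      rw [inner_self_eq_norm_sq_to_K, hn]; norm_num
    rw [EuclideanSpace.inner_eq_star_dotProduct, dotProduct_comm] at h1
    simpa using h1
  have hAv := hA.mulVec_eigenvectorBasis i
  rw [sub_mulVec, smul_mulVec, one_mulVec, hAv, dotProduct_sub, dotProduct_smul,
    dotProduct_smul, hvv] at h2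
  simp only [smul_eq_mul, mul_one] at h2
  have : (0 : ℂ) ≤ ((c - hA.eigenvalues i : ℝ) : ℂ) := by
    push_cast
    convert h2 using 1
    simp [Complex.real_smul]
  rw [Complex.zero_le_real] at this
  linarith

lemma neg_le_eig {A : Matrix (Fin m) (Fin m) ℂ} (hA : A.IsHermitian) {c : ℝ}
    (h : (A + (c : ℂ) • (1 : Matrix (Fin m) (Fin m) ℂ)).PosSemidef) (i : Fin m) :
    -c ≤ hA.eigenvalues i := by
  have h2 := h.dotProduct_mulVec_nonneg ⇑(hA.eigenvectorBasis i)
  have hvv : dotProduct (star ⇑(hA.eigenvectorBasis i)) ⇑(hA.eigenvectorBasis i) = 1 := by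
    have hn := hA.eigenvectorBasis.orthonormal.1 i
    have h1 : (⟪hA.eigenvectorBasis i, hA.eigenvectorBasis i⟫_ℂ) = 1 := by
      rw [inner_self_eq_norm_sq_to_K, hn]; norm_num
    rw [EuclideanSpace.inner_eq_star_dotProduct, dotProduct_comm] at h1
    simpa using h1
  have hAv := hA.mulVec_eigenvectorBasis i
  rw [add_mulVec, smul_mulVec, one_mulVec, hAv, dotProduct_add, dotProduct_smul,
    dotProduct_smul, hvv] at h2
  simp only [smul_eq_mul, mul_one] at h2
  have : (0 : ℂ) ≤ ((hA.eigenvalues i + c : ℝ) : ℂ) := by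
    push_cast
    convert h2 using 1
    simp [Complex.real_smul]
  rw [Complex.zero_le_real] at this
  linarith


open Matrix

variable {m : ℕ}

lemma key {A : Matrix (Fin m) (Fin m) ℂ} (hA : A.IsHermitian) (s : ℝ) :
    exp ((s : ℂ) • A) =
      (hA.eigenvectorUnitary : Matrix (Fin m) (Fin m) ℂ) *
        diagonal (fun i => Complex.exp (s * hA.eigenvalues i)) *
        star (hA.eigenvectorUnitary : Matrix (Fin m) (Fin m) ℂ) := by
  set U : Matrix (Fin m) (Fin m) ℂ := (hA.eigenvectorUnitary : Matrix (Fin m) (Fin m) ℂ)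
  have hUU : star U * U = 1 := Unitary.coe_star_mul_self _
  have hUU' : U * star U = 1 := Unitary.coe_mul_star_self _
  have hU : IsUnit U := isUnit_iff_exists.mpr ⟨star U, hUU', hUU⟩
  have hUinv : U⁻¹ = star U := inv_eq_left_inv hUU
  have hsA : (s : ℂ) • A = U * diagonal (fun i => ((s * hA.eigenvalues i : ℝ) : ℂ)) * U⁻¹ := by
    rw [hUinv]
    conv_lhs => rw [hA.spectral_theorem, Unitary.conjStarAlgAut_apply, ← Unitary.coe_star]
    rw [← smul_mul_assoc, ← mul_smul_comm]
    congr 2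
    ext i j
    simp [Matrix.diagonal_apply, apply_ite ((((s : ℂ))) • ·)]
  rw [hsA, Matrix.exp_conj _ _ hU, Matrix.exp_diagonal, hUinv]
  congr 2
  funext i
  rw [Pi.exp_def]
  simp [← Complex.exp_eq_exp_ℂ]


lemma exp_psd {m : ℕ} {A : Matrix (Fin m) (Fin m) ℂ} (hA : A.IsHermitian) (s : ℝ) :
    (exp ((s : ℂ) • A)).PosSemidef := by
  rw [key hA s]
  have hdiag : (diagonal (fun i => Complex.exp (s * hA.eigenvalues i))).PosSemidef := by
    refine PosSemidef.diagonal fun i => ?_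
    have : (Complex.exp (s * hA.eigenvalues i)) = ((Real.exp (s * hA.eigenvalues i) : ℝ) : ℂ) := by
      rw [Complex.ofReal_exp]; push_cast; ring_nf
    rw [this]
    exact Complex.zero_le_real.mpr (Real.exp_pos _).le
  have := hdiag.mul_mul_conjTranspose_same (hA.eigenvectorUnitary : Matrix (Fin m) (Fin m) ℂ)
  rwa [← Matrix.star_eq_conjTranspose] at this

lemma dom_psd {m : ℕ} {A : Matrix (Fin m) (Fin m) ℂ} (hA : A.IsHermitian) {R : ℝ} (hR : 0 < R)
    (hlo : ∀ i, -R ≤ hA.eigenvalues i) (hhi : ∀ i, hA.eigenvalues i ≤ R) (s : ℝ) :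
    ((Real.cosh (s * R) : ℂ) • (1 : Matrix (Fin m) (Fin m) ℂ)
      + ((Real.sinh (s * R) / R : ℝ) : ℂ) • A - exp ((s : ℂ) • A)).PosSemidef := by
  set U : Matrix (Fin m) (Fin m) ℂ := (hA.eigenvectorUnitary : Matrix (Fin m) (Fin m) ℂ) with hUdef
  have hUU' : U * star U = 1 := Unitary.coe_mul_star_self _
  set g : Fin m → ℝ := fun i =>
    Real.cosh (s * R) + Real.sinh (s * R) / R * hA.eigenvalues i
      - Real.exp (s * hA.eigenvalues i) with hg
  have hgpos : ∀ i, 0 ≤ g i := fun i => by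
    have := scalar_bound (s := s) hR (hlo i) (hhi i); simp only [hg]; linarith
  have hdiag : (diagonal (fun i => ((g i : ℝ) : ℂ))).PosSemidef :=
    PosSemidef.diagonal fun i => Complex.zero_le_real.mpr (hgpos i)
  have hmain := hdiag.mul_mul_conjTranspose_same U
  rw [← Matrix.star_eq_conjTranspose] at hmain
  have e1 : diagonal (fun i => ((g i : ℝ) : ℂ)) =
      (Real.cosh (s * R) : ℂ) • (1 : Matrix (Fin m) (Fin m) ℂ)
        + ((Real.sinh (s * R) / R : ℝ) : ℂ) • diagonal (RCLike.ofReal ∘ hA.eigenvalues)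
        - diagonal (fun i => Complex.exp (s * hA.eigenvalues i)) := by
    ext i j
    by_cases h : i = j
    · subst h
      simp only [Matrix.diagonal_apply_eq, Matrix.sub_apply, Matrix.add_apply,
        Matrix.smul_apply, Matrix.one_apply_eq, smul_eq_mul, hg, Function.comp_apply]
      rw [show (Complex.exp (s * hA.eigenvalues i)) =
          ((Real.exp (s * hA.eigenvalues i) : ℝ) : ℂ) from by
        rw [Complex.ofReal_exp]; push_cast; ring_nf]
      push_cast
      norm_cast
      push_cast
      ring_nf
      rfl
    · simp [Matrix.diagonal_apply, Matrix.one_apply, h]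
  have p1 : U * ((Real.cosh (s * R) : ℂ) • (1 : Matrix (Fin m) (Fin m) ℂ)) * star U
      = (Real.cosh (s * R) : ℂ) • (1 : Matrix (Fin m) (Fin m) ℂ) := by
    rw [mul_smul_comm, smul_mul_assoc, mul_one, hUU']
  have p2 : U * (((Real.sinh (s * R) / R : ℝ) : ℂ) • diagonal (RCLike.ofReal ∘ hA.eigenvalues))
      * star U = ((Real.sinh (s * R) / R : ℝ) : ℂ) • A := by
    rw [mul_smul_comm, smul_mul_assoc]
    congr 1
    conv_rhs => rw [hA.spectral_theorem, Unitary.conjStarAlgAut_apply, ← Unitary.coe_star]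
    rfl
  have p3 : U * diagonal (fun i => Complex.exp (s * hA.eigenvalues i)) * star U
      = exp ((s : ℂ) • A) := (key hA s).symm
  rwa [e1, mul_sub, mul_add, sub_mul, add_mul, p1, p2, p3] at hmain
open Matrix

lemma integral_psd {m : ℕ} {Ω : Type*} [MeasurableSpace Ω] {μ : Measure Ω}
    [IsProbabilityMeasure μ] {M : Ω → Matrix (Fin m) (Fin m) ℂ}
    (hint : ∀ i j, Integrable (fun ω => M ω i j) μ)
    (hpsd : ∀ᵐ ω ∂μ, (M ω).PosSemidef) :
    (Matrix.of fun i j => ∫ ω, M ω i j ∂μ).PosSemidef := by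
  rw [Matrix.posSemidef_iff_dotProduct_mulVec]
  constructor
  · ext i j
    simp only [Matrix.conjTranspose_apply, Matrix.of_apply, Complex.star_def]
    rw [← integral_conj]
    refine integral_congr_ae ?_
    filter_upwards [hpsd] with ω h
    have := congrFun (congrFun h.1 i) j
    rwa [Matrix.conjTranspose_apply] at this
  · intro x
    have hrw : ∀ N : Matrix (Fin m) (Fin m) ℂ,
        dotProduct (star x) (N *ᵥ x) = ∑ i, ∑ j, starRingEnd ℂ (x i) * N i j * x j := by
      intro N
      simp [dotProduct, Matrix.mulVec, Finset.mul_sum, mul_assoc, mul_comm, mul_left_comm]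
    have hInt : Integrable (fun ω => ∑ i, ∑ j, starRingEnd ℂ (x i) * M ω i j * x j) μ := by
      refine integrable_finset_sum _ fun i _ => integrable_finset_sum _ fun j _ => ?_
      exact ((hint i j).const_mul _).mul_const _
    have hkey : dotProduct (star x) ((Matrix.of fun i j => ∫ ω, M ω i j ∂μ) *ᵥ x)
        = ∫ ω, dotProduct (star x) (M ω *ᵥ x) ∂μ := by
      simp only [hrw, Matrix.of_apply]
      rw [integral_finset_sum _ fun i _ => integrable_finset_sum _ fun j _ =>
        ((hint i j).const_mul _).mul_const _]
      refine Finset.sum_congr rfl fun i _ => ?_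
      rw [integral_finset_sum _ fun j _ => ((hint i j).const_mul _).mul_const _]
      refine Finset.sum_congr rfl fun j _ => ?_
      rw [integral_mul_const, integral_const_mul]
    rw [hkey]
    have hae : ∀ᵐ ω ∂μ, (0 : ℂ) ≤ dotProduct (star x) (M ω *ᵥ x) := by
      filter_upwards [hpsd] with ω h using h.dotProduct_mulVec_nonneg x
    rw [Complex.nonneg_iff]
    constructor
    · have : ∀ᵐ ω ∂μ, 0 ≤ (dotProduct (star x) (M ω *ᵥ x)).re := by
        filter_upwards [hae] with ω h using (Complex.nonneg_iff.mp h).1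
      have hInt' : Integrable (fun ω => dotProduct (star x) (M ω *ᵥ x)) μ := by
        simpa only [hrw] using hInt
      rw [← RCLike.re_to_complex, ← integral_re hInt']
      exact integral_nonneg_of_ae this
    · have : ∀ᵐ ω ∂μ, (dotProduct (star x) (M ω *ᵥ x)).im = 0 := by
        filter_upwards [hae] with ω h using ((Complex.nonneg_iff.mp h).2).symm
      have hInt' : Integrable (fun ω => dotProduct (star x) (M ω *ᵥ x)) μ := by
        simpa only [hrw] using hInt
      rw [← RCLike.im_to_complex, ← integral_im hInt']
      rw [integral_congr_ae (f := fun ω => RCLike.im (dotProduct (star x) (M ω *ᵥ x)))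
        (g := fun _ => (0:ℝ)) this]
      simp
open Matrix

lemma opnorm_le {m : ℕ} {A : Matrix (Fin m) (Fin m) ℂ} {r : ℝ} (hr : 0 ≤ r)
    (hpsd : A.PosSemidef)
    (hub : ∀ i, hpsd.1.eigenvalues i ≤ r) :
    ‖Matrix.toEuclideanCLM (𝕜 := ℂ) A‖ ≤ r := by
  set hA := hpsd.1
  set U : Matrix (Fin m) (Fin m) ℂ := (hA.eigenvectorUnitary : Matrix (Fin m) (Fin m) ℂ) with hUdef
  set D : Matrix (Fin m) (Fin m) ℂ := diagonal (RCLike.ofReal ∘ hA.eigenvalues) with hDdef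
  have hUU : star U * U = 1 := Unitary.coe_star_mul_self _
  set φ := Matrix.toEuclideanCLM (𝕜 := ℂ) (n := Fin m)
  have hUU' : U * star U = 1 := Unitary.coe_mul_star_self _
  have unit_norm : ∀ V : Matrix (Fin m) (Fin m) ℂ, star V * V = 1 → ‖φ V‖ ≤ 1 := by
    intro V hV
    have h1 : star (φ V) * (φ V) = 1 := by
      rw [← map_star, ← _root_.map_mul, hV, _root_.map_one]
    have h2 := CStarRing.norm_star_mul_self (x := φ V)
    rw [h1] at h2
    have h3 : ‖(1 : EuclideanSpace ℂ (Fin m) →L[ℂ] EuclideanSpace ℂ (Fin m))‖ ≤ 1 := by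
      rw [ContinuousLinearMap.one_def]
      exact ContinuousLinearMap.norm_id_le
    nlinarith [norm_nonneg (φ V)]
  have hu : ‖φ U‖ ≤ 1 := unit_norm U hUU
  have hu' : ‖φ (star U)‖ ≤ 1 := unit_norm (star U) (by rw [star_star, hUU'])
  have hd : ‖φ D‖ ≤ r := by
    refine ContinuousLinearMap.opNorm_le_bound _ hr fun x => ?_
    have hcoord : ∀ i, (φ D x) i = (hA.eigenvalues i : ℂ) * x i := by
      intro i
      have := congrFun (Matrix.ofLp_toEuclideanCLM (A := D) (x := x)) i
      rw [this]; simp [hDdef, Matrix.mulVec_diagonal]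
    have hx : ∀ i, ‖(φ D x) i‖ ≤ r * ‖x i‖ := by
      intro i
      rw [hcoord i, norm_mul]
      have : ‖((hA.eigenvalues i : ℝ) : ℂ)‖ ≤ r := by
        rw [Complex.norm_real, Real.norm_eq_abs, abs_of_nonneg (hpsd.eigenvalues_nonneg i)]
        exact hub i
      exact mul_le_mul_of_nonneg_right this (norm_nonneg _)
    calc ‖φ D x‖ = Real.sqrt (∑ i, ‖(φ D x) i‖ ^ 2) := by
            rw [EuclideanSpace.norm_eq]
      _ ≤ Real.sqrt (∑ i, (r * ‖x i‖) ^ 2) := by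
            refine Real.sqrt_le_sqrt (Finset.sum_le_sum fun i _ => ?_)
            exact pow_le_pow_left₀ (norm_nonneg _) (hx i) 2
      _ = Real.sqrt (r ^ 2 * ∑ i, ‖x i‖ ^ 2) := by
            rw [Finset.mul_sum]; congr 1; exact Finset.sum_congr rfl fun i _ => by ring
      _ = r * Real.sqrt (∑ i, ‖x i‖ ^ 2) := by
            rw [Real.sqrt_mul (sq_nonneg r), Real.sqrt_sq hr]
      _ = r * ‖x‖ := by rw [EuclideanSpace.norm_eq]
  have hAeq : A = U * D * star U := by
    conv_lhs => rw [hA.spectral_theorem, Unitary.conjStarAlgAut_apply, ← Unitary.coe_star]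
    rfl
  calc ‖φ A‖ = ‖φ U * φ D * φ (star U)‖ := by rw [← _root_.map_mul, ← _root_.map_mul, ← hAeq]
    _ ≤ ‖φ U * φ D‖ * ‖φ (star U)‖ := norm_mul_le _ _
    _ ≤ ‖φ U‖ * ‖φ D‖ * ‖φ (star U)‖ := by
          exact mul_le_mul_of_nonneg_right (norm_mul_le _ _) (norm_nonneg _)
    _ ≤ 1 * r * 1 := by
          have := mul_le_mul (mul_le_mul hu hd (norm_nonneg _) zero_le_one) hu' (norm_nonneg _)
            (by linarith : (0:ℝ) ≤ 1 * r)
          simpa using this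
    _ = r := by ring


lemma diag_nonneg {m : ℕ} {P : Matrix (Fin m) (Fin m) ℂ} (h : P.PosSemidef) (i : Fin m) :
    0 ≤ P i i := by
  have := h.dotProduct_mulVec_nonneg (Pi.single i 1)
  simpa [dotProduct, Matrix.mulVec, Pi.single_apply] using this

end HoeffAux


/-- The ℓ²→ℓ² operator norm of a complex square matrix. -/
noncomputable def opNorm {m : ℕ} (A : Matrix (Fin m) (Fin m) ℂ) : ℝ :=
  ‖Matrix.toEuclideanCLM (𝕜 := ℂ) A‖

/-- Hermitian Hoeffding lemma: if `Y` is a centred random Hermitian matrix with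
`-R•1 ⪯ Y ⪯ R•1` a.s., then `E[exp (s Y)] ⪯ cosh(sR)•1 ⪯ exp(s²R²/2)•1`, hence
`‖E[exp (s Y)]‖ ≤ exp(s²R²/2)` and `E[tr exp (s Y)] ≤ m exp(s²R²/2)`. -/
theorem stmt0 {m : ℕ} {Ω : Type*} [MeasurableSpace Ω] (μ : Measure Ω)
    [IsProbabilityMeasure μ]
    (Y : Ω → Matrix (Fin m) (Fin m) ℂ) (R : ℝ) (hR : 0 < R)
    (hint : ∀ i j, Integrable (fun ω => Y ω i j) μ)
    (hexpint : ∀ s : ℝ, ∀ i j, Integrable (fun ω => exp ((s : ℂ) • Y ω) i j) μ)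
    (hmean : ∀ i j, (∫ ω, Y ω i j ∂μ) = 0)
    (hherm : ∀ᵐ ω ∂μ, (Y ω).IsHermitian)
    (hbdd : ∀ᵐ ω ∂μ,
      (Y ω + (R : ℂ) • (1 : Matrix (Fin m) (Fin m) ℂ)).PosSemidef ∧
      ((R : ℂ) • (1 : Matrix (Fin m) (Fin m) ℂ) - Y ω).PosSemidef)
    (s : ℝ) :
    ((Real.cosh (s * R) : ℂ) • (1 : Matrix (Fin m) (Fin m) ℂ) -
        Matrix.of fun i j => ∫ ω, exp ((s : ℂ) • Y ω) i j ∂μ).PosSemidef ∧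
    ((Real.exp (s ^ 2 * R ^ 2 / 2) : ℂ) • (1 : Matrix (Fin m) (Fin m) ℂ) -
        (Real.cosh (s * R) : ℂ) • (1 : Matrix (Fin m) (Fin m) ℂ)).PosSemidef ∧
    opNorm (Matrix.of fun i j => ∫ ω, exp ((s : ℂ) • Y ω) i j ∂μ) ≤
        Real.exp (s ^ 2 * R ^ 2 / 2) ∧
    (∫ ω, (Matrix.trace (exp ((s : ℂ) • Y ω))).re ∂μ) ≤
        m * Real.exp (s ^ 2 * R ^ 2 / 2) := by
  classical
  set c : ℝ := Real.cosh (s * R) with hc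
  set t : ℝ := Real.sinh (s * R) / R with ht
  set ec : ℝ := Real.exp (s ^ 2 * R ^ 2 / 2) with hec
  set E : Matrix (Fin m) (Fin m) ℂ :=
    Matrix.of fun i j => ∫ ω, exp ((s : ℂ) • Y ω) i j ∂μ with hE
  have hcos_le : c ≤ ec := by
    have := Real.cosh_le_exp_half_sq (s * R)
    rwa [mul_pow] at this
  -- Part 1
  have hDint : ∀ i j, Integrable (fun ω =>
      ((c : ℂ) • (1 : Matrix (Fin m) (Fin m) ℂ) + (t : ℂ) • Y ω - exp ((s : ℂ) • Y ω)) i j) μ := by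
    intro i j
    have heq : (fun ω => ((c : ℂ) • (1 : Matrix (Fin m) (Fin m) ℂ) + (t : ℂ) • Y ω
        - exp ((s : ℂ) • Y ω)) i j)
        = fun ω => ((c : ℂ) • (1 : Matrix (Fin m) (Fin m) ℂ)) i j + (t : ℂ) * Y ω i j
          - exp ((s : ℂ) • Y ω) i j := by
      funext ω
      simp [Matrix.sub_apply, Matrix.add_apply, Matrix.smul_apply, smul_eq_mul]
    rw [heq]
    exact ((integrable_const _).add ((hint i j).const_mul _)).sub (hexpint s i j)
  have hDpsd : ∀ᵐ ω ∂μ, ((c : ℂ) • (1 : Matrix (Fin m) (Fin m) ℂ) + (t : ℂ) • Y ω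
      - exp ((s : ℂ) • Y ω)).PosSemidef := by
    filter_upwards [hherm, hbdd] with ω h1 h2
    exact HoeffAux.dom_psd h1 hR (fun i => HoeffAux.neg_le_eig h1 h2.1 i)
      (fun i => HoeffAux.eig_le h1 h2.2 i) s
  have hPSD := HoeffAux.integral_psd hDint hDpsd
  have hmat : (Matrix.of fun i j => ∫ ω, ((c : ℂ) • (1 : Matrix (Fin m) (Fin m) ℂ)
      + (t : ℂ) • Y ω - exp ((s : ℂ) • Y ω)) i j ∂μ)
      = (c : ℂ) • (1 : Matrix (Fin m) (Fin m) ℂ) - E := by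
    ext i j
    have heq : (fun ω => ((c : ℂ) • (1 : Matrix (Fin m) (Fin m) ℂ) + (t : ℂ) • Y ω
        - exp ((s : ℂ) • Y ω)) i j)
        = fun ω => ((c : ℂ) • (1 : Matrix (Fin m) (Fin m) ℂ)) i j + (t : ℂ) * Y ω i j
          - exp ((s : ℂ) • Y ω) i j := by
      funext ω
      simp [Matrix.sub_apply, Matrix.add_apply, Matrix.smul_apply, smul_eq_mul]
    simp only [Matrix.of_apply, heq]
    have hconst : Integrable (fun _ : Ω => ((c : ℂ) • (1 : Matrix (Fin m) (Fin m) ℂ)) i j) μ :=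
      integrable_const _
    have hmul : Integrable (fun ω => (t : ℂ) * Y ω i j) μ := (hint i j).const_mul _
    have hadd : Integrable (fun ω => ((c : ℂ) • (1 : Matrix (Fin m) (Fin m) ℂ)) i j
        + (t : ℂ) * Y ω i j) μ := hconst.add hmul
    rw [integral_sub hadd (hexpint s i j), integral_add hconst hmul,
      integral_const, integral_const_mul, hmean i j]
    simp only [Matrix.sub_apply, Matrix.of_apply, mul_zero, add_zero, measure_univ,
      ENNReal.toReal_one, probReal_univ, one_smul, hE]
  rw [hmat] at hPSD
  refine ⟨hPSD, ?_, ?_, ?_⟩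
  -- Part 2
  · have h2 : (ec : ℂ) • (1 : Matrix (Fin m) (Fin m) ℂ) - (c : ℂ) • (1 : Matrix (Fin m) (Fin m) ℂ)
        = Matrix.diagonal (fun _ : Fin m => ((ec - c : ℝ) : ℂ)) := by
      ext i j
      by_cases h : i = j
      · subst h
        simp [Matrix.one_apply, Matrix.diagonal_apply]
      · simp [Matrix.one_apply, Matrix.diagonal_apply, h]
    rw [h2]
    exact Matrix.PosSemidef.diagonal fun i => Complex.zero_le_real.mpr (by linarith)
  -- Part 3
  · have hexppsd : ∀ᵐ ω ∂μ, (exp ((s : ℂ) • Y ω)).PosSemidef := by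
      filter_upwards [hherm] with ω h using HoeffAux.exp_psd h s
    have hEpsd : E.PosSemidef := HoeffAux.integral_psd (hexpint s) hexppsd
    have hEub : ((ec : ℂ) • (1 : Matrix (Fin m) (Fin m) ℂ) - E).PosSemidef := by
      have h2 : ((ec : ℂ) • (1 : Matrix (Fin m) (Fin m) ℂ)
          - (c : ℂ) • (1 : Matrix (Fin m) (Fin m) ℂ)).PosSemidef := by
        have h2' : (ec : ℂ) • (1 : Matrix (Fin m) (Fin m) ℂ)
            - (c : ℂ) • (1 : Matrix (Fin m) (Fin m) ℂ)
            = Matrix.diagonal (fun _ : Fin m => ((ec - c : ℝ) : ℂ)) := by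
          ext i j
          by_cases h : i = j
          · subst h
            simp [Matrix.one_apply, Matrix.diagonal_apply]
          · simp [Matrix.one_apply, Matrix.diagonal_apply, h]
        rw [h2']
        exact Matrix.PosSemidef.diagonal fun i => Complex.zero_le_real.mpr (by linarith)
      have := h2.add hPSD
      rwa [sub_add_sub_cancel] at this
    show ‖Matrix.toEuclideanCLM (𝕜 := ℂ) E‖ ≤ ec
    exact HoeffAux.opnorm_le (Real.exp_pos _).le hEpsd
      (fun i => HoeffAux.eig_le hEpsd.1 hEub i)
  -- Part 4
  · have htr : ∀ ω, (Matrix.trace (exp ((s : ℂ) • Y ω))).re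
        = ∑ i, (exp ((s : ℂ) • Y ω) i i).re := by
      intro ω
      simp [Matrix.trace, Matrix.diag, Complex.re_sum]
    simp only [htr]
    have hre : ∀ i : Fin m, Integrable (fun ω => (exp ((s : ℂ) • Y ω) i i).re) μ :=
      fun i => (hexpint s i i).re
    rw [integral_finset_sum _ fun i _ => hre i]
    have hterm : ∀ i, (∫ ω, (exp ((s : ℂ) • Y ω) i i).re ∂μ) = (E i i).re := by
      intro i
      have := integral_re (hexpint s i i) (μ := μ)
      simpa [RCLike.re_to_complex, hE] using this
    have hbound : ∀ i : Fin m, (E i i).re ≤ c := by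
      intro i
      have h0 := HoeffAux.diag_nonneg hPSD i
      have h1 : ((c : ℂ) • (1 : Matrix (Fin m) (Fin m) ℂ) - E) i i = (c : ℂ) - E i i := by
        simp [Matrix.sub_apply, Matrix.one_apply]
      rw [h1] at h0
      have := (Complex.nonneg_iff.mp h0).1
      simp only [Complex.sub_re, Complex.ofReal_re] at this
      linarith
    calc (∑ i, ∫ ω, (exp ((s : ℂ) • Y ω) i i).re ∂μ) = ∑ i, (E i i).re := by
          exact Finset.sum_congr rfl fun i _ => hterm i
      _ ≤ ∑ _i : Fin m, c := Finset.sum_le_sum fun i _ => hbound i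
      _ = m * c := by simp [mul_comm]
      _ ≤ m * ec := by
          exact mul_le_mul_of_nonneg_left hcos_le (by positivity)
end

section
/- Assume 0 ≤ κ_ℓ ≤ 1 for all ℓ ≥ 1 and that there exists κ ∈ (0,1] such that for all t ≥ 1, 1 + Σ_{k=1}^t Π_{ℓ=k}^t (1−κ_ℓ) ≤ 1/κ. Then for every n ≥ 1, Σ_{i=1}^n (e^{πκ/24})^{i−1} · Π_{ℓ=n−i+2}^n (1−κ_ℓ) ≤ 3/κ, with the convention that an empty product equals 1. -/
open Finset

private lemma shift_sum (f : ℕ → ℝ) (t : ℕ) :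
    ∑ i ∈ Finset.Icc 1 (t+1), f i = f 1 + ∑ j ∈ Finset.Icc 1 t, f (j+1) := by
  have himg : (Finset.Icc 1 t).image (· + 1) = Finset.Icc 2 (t+1) := by
    ext i
    simp only [Finset.mem_image, Finset.mem_Icc]
    constructor
    · rintro ⟨j, hj, rfl⟩; omega
    · intro hi; exact ⟨i - 1, by omega, by omega⟩
  have hins : Finset.Icc 1 (t+1) = insert 1 (Finset.Icc 2 (t+1)) := by
    ext i
    simp only [Finset.mem_insert, Finset.mem_Icc]
    omega
  rw [hins, Finset.sum_insert (by simp [Finset.mem_Icc]), ← himg,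
    Finset.sum_image (by intro a _ b _ h; simp only at h; omega)]

/-- Tilted-renewal bound: if `0 ≤ κ_ℓ ≤ 1` and
`1 + Σ_{k=1}^t Π_{ℓ=k}^t (1−κ_ℓ) ≤ 1/κ` for all `t ≥ 1`, then for every `n ≥ 1`,
`Σ_{i=1}^n (e^{πκ/24})^{i−1} Π_{ℓ=n−i+2}^n (1−κ_ℓ) ≤ 3/κ`. -/
theorem stmt6 (κseq : ℕ → ℝ) (κ : ℝ) (hκ0 : 0 < κ) (hκ1 : κ ≤ 1)
    (hseq : ∀ ℓ, 1 ≤ ℓ → κseq ℓ ∈ Set.Icc (0:ℝ) 1)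
    (havg : ∀ t, 1 ≤ t →
      1 + ∑ k ∈ Finset.Icc 1 t, ∏ ℓ ∈ Finset.Icc k t, (1 - κseq ℓ) ≤ 1 / κ) :
    ∀ n, 1 ≤ n →
      ∑ i ∈ Finset.Icc 1 n,
        (Real.exp (Real.pi * κ / 24)) ^ (i - 1) *
          ∏ ℓ ∈ Finset.Icc (n - i + 2) n, (1 - κseq ℓ) ≤ 3 / κ := by
  set r := Real.exp (Real.pi * κ / 24) with hrdef
  have hx0 : 0 ≤ Real.pi * κ / 24 := by positivity
  have hr1 : (1:ℝ) ≤ r := Real.one_le_exp hx0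
  have hrκ : r ≤ 1 + κ / 2 := by
    have hx : Real.pi * κ / 24 ≤ κ / 6 := by
      have h4 := Real.pi_le_four
      nlinarith
    have h1 : r * (1 - Real.pi * κ / 24) ≤ 1 := by
      have h2 := Real.add_one_le_exp (-(Real.pi * κ / 24))
      have h3 := (Real.exp_pos (Real.pi * κ / 24)).le
      calc r * (1 - Real.pi * κ / 24)
          ≤ r * Real.exp (-(Real.pi * κ / 24)) := by
            apply mul_le_mul_of_nonneg_left _ h3
            linarith
        _ = 1 := by rw [hrdef, ← Real.exp_add]; simp
    nlinarith [Real.exp_pos (Real.pi * κ / 24)]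
  have prodnn : ∀ a b : ℕ, 1 ≤ a → (0:ℝ) ≤ ∏ ℓ ∈ Finset.Icc a b, (1 - κseq ℓ) := by
    intro a b ha
    apply Finset.prod_nonneg
    intro ℓ hℓ
    have := hseq ℓ (le_trans ha (Finset.mem_Icc.mp hℓ).1)
    linarith [this.2]
  have key : ∀ t : ℕ,
      ∑ i ∈ Finset.Icc 1 t,
        r ^ (i - 1) * ∏ ℓ ∈ Finset.Icc (t - i + 2) t, (1 - κseq ℓ)
      ≤ 2 * (1 + ∑ k ∈ Finset.Icc 1 t, ∏ ℓ ∈ Finset.Icc k t, (1 - κseq ℓ)) := by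
    intro t
    induction t with
    | zero => simp
    | succ t ih =>
      set b : ℝ := 1 - κseq (t+1) with hbdef
      have hb := hseq (t+1) (by omega)
      have hb0 : 0 ≤ b := by simp only [hbdef]; linarith [hb.2]
      have hb1 : b ≤ 1 := by simp only [hbdef]; linarith [hb.1]
      set S : ℝ := ∑ i ∈ Finset.Icc 1 t,
        r ^ (i - 1) * ∏ ℓ ∈ Finset.Icc (t - i + 2) t, (1 - κseq ℓ) with hSdef
      set A : ℝ := ∑ k ∈ Finset.Icc 1 t, ∏ ℓ ∈ Finset.Icc k t, (1 - κseq ℓ) with hAdef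
      -- recursion for A
      have hArec : ∑ k ∈ Finset.Icc 1 (t+1), ∏ ℓ ∈ Finset.Icc k (t+1), (1 - κseq ℓ)
          = b * (1 + A) := by
        rw [Finset.sum_Icc_succ_top (by omega : 1 ≤ t + 1)]
        have h1 : ∀ k ∈ Finset.Icc 1 t,
            ∏ ℓ ∈ Finset.Icc k (t+1), (1 - κseq ℓ)
            = (∏ ℓ ∈ Finset.Icc k t, (1 - κseq ℓ)) * b := by
          intro k hk
          rw [Finset.prod_Icc_succ_top (by exact le_trans (Finset.mem_Icc.mp hk).2 (by omega))]
        rw [Finset.sum_congr rfl h1, ← Finset.sum_mul, Finset.Icc_self,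
          Finset.prod_singleton, ← hAdef]
        ring
      -- recursion for S
      have hSrec : ∑ i ∈ Finset.Icc 1 (t+1),
          r ^ (i - 1) * ∏ ℓ ∈ Finset.Icc (t + 1 - i + 2) (t+1), (1 - κseq ℓ)
          = 1 + r * b * S := by
        rw [shift_sum (fun i => r ^ (i - 1) * ∏ ℓ ∈ Finset.Icc (t + 1 - i + 2) (t+1),
          (1 - κseq ℓ)) t]
        have h0 : r ^ (1 - 1) * ∏ ℓ ∈ Finset.Icc (t + 1 - 1 + 2) (t+1), (1 - κseq ℓ)
            = 1 := by
          rw [Finset.Icc_eq_empty (by omega)]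
          simp
        have h1 : ∀ j ∈ Finset.Icc 1 t,
            r ^ (j + 1 - 1) * ∏ ℓ ∈ Finset.Icc (t + 1 - (j+1) + 2) (t+1), (1 - κseq ℓ)
            = r * b * (r ^ (j - 1) * ∏ ℓ ∈ Finset.Icc (t - j + 2) t, (1 - κseq ℓ)) := by
          intro j hj
          have hj' := Finset.mem_Icc.mp hj
          have e1 : t + 1 - (j+1) = t - j := by omega
          have e2 : t - j + 2 ≤ t + 1 := by omega
          rw [e1, Finset.prod_Icc_succ_top e2]
          have e3 : j + 1 - 1 = (j - 1) + 1 := by omega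
          rw [e3, pow_succ]
          ring
        rw [h0, Finset.sum_congr rfl h1, ← Finset.mul_sum, ← hSdef]
      rw [hSrec, hArec]
      -- the inequality
      have hbound := havg (t+1) (by omega)
      rw [hArec] at hbound
      have hy : κ * (1 + b * (1 + A)) ≤ 1 := by
        rw [mul_comm]
        exact (le_div_iff₀ hκ0).mp hbound
      have hS0 : 0 ≤ S := by
        rw [hSdef]
        apply Finset.sum_nonneg
        intro i hi
        exact mul_nonneg (pow_nonneg (by linarith) _) (prodnn _ _ (by omega))
      have hA0 : 0 ≤ A := by
        rw [hAdef]
        apply Finset.sum_nonneg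
        intro k hk
        exact prodnn _ _ (Finset.mem_Icc.mp hk).1
      have hstep : r * b * S ≤ r * b * (2 * (1 + A)) :=
        mul_le_mul_of_nonneg_left ih (mul_nonneg (by linarith) hb0)
      nlinarith [mul_nonneg hb0 hA0, mul_nonneg hb0 (mul_nonneg hb0 hA0),
        mul_le_mul_of_nonneg_right hrκ (mul_nonneg hb0 (by linarith : (0:ℝ) ≤ 1 + A))]
  intro n hn
  calc ∑ i ∈ Finset.Icc 1 n,
        r ^ (i - 1) * ∏ ℓ ∈ Finset.Icc (n - i + 2) n, (1 - κseq ℓ)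
      ≤ 2 * (1 + ∑ k ∈ Finset.Icc 1 n, ∏ ℓ ∈ Finset.Icc k n, (1 - κseq ℓ)) := key n
    _ ≤ 2 * (1 / κ) := by
        have := havg n hn
        linarith
    _ ≤ 3 / κ := by
        have h := one_div_pos.mpr hκ0
        have : (3:ℝ) / κ = 3 * (1 / κ) := by ring
        rw [this]
        linarith
end

section
/- Let (Ω,d) be a Polish metric space and P a Markov kernel with Ollivier curvature at least κ ∈ [0,1], i.e., W₁(P(x,·), P(y,·)) ≤ (1−κ)d(x,y) for all x,y. Let ψ : [0,D] → [0,∞) be increasing and concave (D the diameter of Ω), and let H : Ω → ℂ^{m×m} satisfy ‖H(x) − H(y)‖_op ≤ ψ(d(x,y)) for all x,y. Then ‖(PH)(x) − (PH)(y)‖_op ≤ ψ((1−κ)d(x,y)) for all x,y. -/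
open MeasureTheory ProbabilityTheory
open scoped ENNReal

/-- The Wasserstein-1 distance between two measures, as an infimum over couplings. -/
noncomputable def W1 {Ω : Type*} [MeasurableSpace Ω] [PseudoEMetricSpace Ω]
    (μ ν : Measure Ω) : ℝ≥0∞ :=
  ⨅ π : {π : Measure (Ω × Ω) // π.map Prod.fst = μ ∧ π.map Prod.snd = ν},
    ∫⁻ p, edist p.1 p.2 ∂(π : Measure (Ω × Ω))

/-!
Let `t = (1-κ) d(x,y)` and let `π` be a coupling of `P(x,·)` and `P(y,·)` of cost close to `t`.
Then `(PH)(x) - (PH)(y) = ∫ (H p.1 - H p.2) dπ` has operator norm at most `∫ ψ(d) dπ`.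
For `t > 0`, concavity and monotonicity give a supporting line `ψ u ≤ ψ t + c (u - t)` with
`c ≥ 0`, so this is at most `ψ t + c (∫ d dπ - t)`, which tends to `ψ t` as the cost tends
to `t`. At `t = 0` there may be no supporting line (`ψ` can jump at `0`), but there
`W₁(P(x,·), P(y,·)) = 0` forces `P(x,·) = P(y,·)`: integrals of Lipschitz functions agree,
and thickened indicators of closed sets are Lipschitz.
-/

open Filter Topology
open scoped NNReal

namespace Matrix

variable {𝕜 n α : Type*} [RCLike 𝕜] [Fintype n] [DecidableEq n] [MeasurableSpace α]
  {μ : Measure α} {F : α → Matrix n n 𝕜}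

/-- `toEuclideanCLM` as a continuous linear map on `n → n → 𝕜` with its product norm, so that
it commutes with Bochner integrals. -/
noncomputable def toEuclideanCLMOfPi :
    (n → n → 𝕜) →L[𝕜] (EuclideanSpace 𝕜 n →L[𝕜] EuclideanSpace 𝕜 n) :=
  LinearMap.toContinuousLinearMap
    ((toEuclideanCLM (n := n) (𝕜 := 𝕜)).toAlgEquiv.toLinearMap ∘ₗ (ofLinearEquiv 𝕜).toLinearMap)

theorem toEuclideanCLMOfPi_apply (A : n → n → 𝕜) :
    toEuclideanCLMOfPi A = toEuclideanCLM (n := n) (𝕜 := 𝕜) (of A) := rfl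

omit [DecidableEq n] in
theorem integrable_of_symm (hF : ∀ i j, Integrable (fun a => F a i j) μ) :
    Integrable (fun a => of.symm (F a)) μ :=
  Integrable.of_eval fun i => Integrable.of_eval (hF i)

theorem integrable_toEuclideanCLM (hF : ∀ i j, Integrable (fun a => F a i j) μ) :
    Integrable (fun a => toEuclideanCLM (n := n) (𝕜 := 𝕜) (F a)) μ := by
  simpa only [toEuclideanCLMOfPi_apply, Equiv.apply_symm_apply] using
    (toEuclideanCLMOfPi (𝕜 := 𝕜) (n := n)).integrable_comp (integrable_of_symm hF)

theorem integral_toEuclideanCLM (hF : ∀ i j, Integrable (fun a => F a i j) μ) :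
    ∫ a, toEuclideanCLM (n := n) (𝕜 := 𝕜) (F a) ∂μ =
      toEuclideanCLM (n := n) (𝕜 := 𝕜) (of fun i j => ∫ a, F a i j ∂μ) := by
  have hentries : (of fun i j => ∫ a, F a i j ∂μ) = of (∫ a, of.symm (F a) ∂μ) := by
    ext i j
    rw [of_apply, of_apply,
      eval_integral (f := fun a => of.symm (F a)) (fun i => Integrable.of_eval (hF i)),
      eval_integral (f := fun a => of.symm (F a) i) (hF i)]
    rfl
  rw [hentries, ← toEuclideanCLMOfPi_apply,
    ← toEuclideanCLMOfPi.integral_comp_comm (integrable_of_symm hF)]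
  rfl

end Matrix

theorem opNorm_of_integral_le {α : Type*} [MeasurableSpace α] {μ : Measure α} {m : ℕ}
    {F : α → Matrix (Fin m) (Fin m) ℂ} (hF : ∀ i j, Integrable (fun a => F a i j) μ) :
    opNorm (Matrix.of fun i j => ∫ a, F a i j ∂μ) ≤ ∫ a, opNorm (F a) ∂μ := by
  rw [opNorm, ← Matrix.integral_toEuclideanCLM hF]
  exact norm_integral_le_integral_norm _

section Coupling

variable {Ω : Type*} [MeasurableSpace Ω]

def IsCoupling (π : Measure (Ω × Ω)) (μ ν : Measure Ω) : Prop :=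
  π.map Prod.fst = μ ∧ π.map Prod.snd = ν

theorem isCoupling_prod (μ ν : Measure Ω) [IsProbabilityMeasure μ] [IsProbabilityMeasure ν] :
    IsCoupling (μ.prod ν) μ ν := by
  simp [IsCoupling]

namespace IsCoupling

variable {π : Measure (Ω × Ω)} {μ ν : Measure Ω}

theorem swap (h : IsCoupling π μ ν) : IsCoupling (π.map Prod.swap) ν μ := by
  refine ⟨?_, ?_⟩
  · rw [Measure.map_map measurable_fst measurable_swap]
    exact h.2
  · rw [Measure.map_map measurable_snd measurable_swap]
    exact h.1

theorem isProbabilityMeasure [IsProbabilityMeasure μ] (h : IsCoupling π μ ν) :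
    IsProbabilityMeasure π := by
  constructor
  rw [← Set.preimage_univ (f := Prod.fst), ← Measure.map_apply measurable_fst MeasurableSet.univ,
    h.1, measure_univ]

theorem lintegral_fst (h : IsCoupling π μ ν) {f : Ω → ℝ≥0∞} (hf : Measurable f) :
    ∫⁻ p, f p.1 ∂π = ∫⁻ z, f z ∂μ := by
  rw [← h.1, lintegral_map hf measurable_fst]

theorem lintegral_snd (h : IsCoupling π μ ν) {f : Ω → ℝ≥0∞} (hf : Measurable f) :
    ∫⁻ p, f p.2 ∂π = ∫⁻ z, f z ∂ν := by
  rw [← h.2, lintegral_map hf measurable_snd]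

variable {E : Type*} [NormedAddCommGroup E] {g : Ω → E}

theorem integrable_fst (h : IsCoupling π μ ν) (hg : Integrable g μ) :
    Integrable (fun p => g p.1) π := by
  rw [← h.1] at hg
  exact hg.comp_measurable measurable_fst

theorem integrable_snd (h : IsCoupling π μ ν) (hg : Integrable g ν) :
    Integrable (fun p => g p.2) π := by
  rw [← h.2] at hg
  exact hg.comp_measurable measurable_snd

variable [NormedSpace ℝ E]

theorem integral_fst (h : IsCoupling π μ ν) (hg : AEStronglyMeasurable g μ) :
    ∫ p, g p.1 ∂π = ∫ z, g z ∂μ := by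
  rw [← h.1] at hg ⊢
  rw [integral_map measurable_fst.aemeasurable hg]

theorem integral_snd (h : IsCoupling π μ ν) (hg : AEStronglyMeasurable g ν) :
    ∫ p, g p.2 ∂π = ∫ z, g z ∂ν := by
  rw [← h.2] at hg ⊢
  rw [integral_map measurable_snd.aemeasurable hg]

end IsCoupling

theorem opNorm_integral_sub_le_of_isCoupling {π : Measure (Ω × Ω)} {μ ν : Measure Ω}
    (h : IsCoupling π μ ν) {m : ℕ} {H : Ω → Matrix (Fin m) (Fin m) ℂ}
    (hμ : ∀ i j, Integrable (fun z => H z i j) μ) (hν : ∀ i j, Integrable (fun z => H z i j) ν) :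
    opNorm ((Matrix.of fun i j => ∫ z, H z i j ∂μ) - Matrix.of fun i j => ∫ z, H z i j ∂ν) ≤
      ∫ p, opNorm (H p.1 - H p.2) ∂π := by
  have hdiff : ((Matrix.of fun i j => ∫ z, H z i j ∂μ) - Matrix.of fun i j => ∫ z, H z i j ∂ν) =
      Matrix.of fun i j => ∫ p, (H p.1 - H p.2) i j ∂π := by
    ext i j
    simp only [Matrix.sub_apply, Matrix.of_apply]
    rw [integral_sub (h.integrable_fst (hμ i j)) (h.integrable_snd (hν i j)),
      h.integral_fst (hμ i j).1, h.integral_snd (hν i j).1]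
  rw [hdiff]
  exact opNorm_of_integral_le fun i j =>
    (h.integrable_fst (hμ i j)).sub (h.integrable_snd (hν i j))

end Coupling

section Wasserstein

variable {Ω : Type*} [MeasurableSpace Ω] [PseudoEMetricSpace Ω] {μ ν : Measure Ω}

theorem W1_eq_iInf_isCoupling :
    W1 μ ν = ⨅ π : {π // IsCoupling π μ ν}, ∫⁻ p, edist p.1 p.2 ∂(π : Measure (Ω × Ω)) :=
  rfl

theorem exists_isCoupling_lintegral_edist_lt {b : ℝ≥0∞} (h : W1 μ ν < b) :
    ∃ π, IsCoupling π μ ν ∧ ∫⁻ p, edist p.1 p.2 ∂π < b := by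
  obtain ⟨π, hπ⟩ := iInf_lt_iff.1 h
  exact ⟨π, π.2, hπ⟩

theorem W1_comm (μ ν : Measure Ω) : W1 μ ν = W1 ν μ := by
  suffices h : ∀ μ ν : Measure Ω, W1 ν μ ≤ W1 μ ν from le_antisymm (h ν μ) (h μ ν)
  intro μ ν
  refine le_iInf fun π => iInf_le_of_le ⟨_, IsCoupling.swap π.2⟩ (le_of_eq ?_)
  change ∫⁻ p, edist p.1 p.2 ∂((π : Measure (Ω × Ω)).map MeasurableEquiv.prodComm) = _
  rw [lintegral_map_equiv]
  exact lintegral_congr fun p => edist_comm _ _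

theorem IsCoupling.lintegral_le_add_mul_lintegral_edist [OpensMeasurableSpace Ω]
    {π : Measure (Ω × Ω)} (h : IsCoupling π μ ν) {K : ℝ≥0} {f : Ω → ℝ≥0}
    (hf : LipschitzWith K f) :
    ∫⁻ z, f z ∂μ ≤ ∫⁻ z, f z ∂ν + K * ∫⁻ p, edist p.1 p.2 ∂π := by
  have hmeas : Measurable fun z => (f z : ℝ≥0∞) :=
    measurable_coe_nnreal_ennreal.comp hf.continuous.measurable
  have hpoint : ∀ x y, (f x : ℝ≥0∞) ≤ f y + K * edist x y := fun x y =>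
    calc (f x : ℝ≥0∞) ≤ f y + edist (f x) (f y) := by
          rw [edist_nndist]; exact_mod_cast NNReal.le_add_nndist _ _
      _ ≤ f y + K * edist x y := by gcongr; exact hf x y
  calc ∫⁻ z, f z ∂μ = ∫⁻ p, f p.1 ∂π := (h.lintegral_fst hmeas).symm
    _ ≤ ∫⁻ p, (f p.2 + K * edist p.1 p.2 : ℝ≥0∞) ∂π := lintegral_mono fun p => hpoint p.1 p.2
    _ = ∫⁻ z, f z ∂ν + K * ∫⁻ p, edist p.1 p.2 ∂π := by
      rw [lintegral_add_left (f := fun p : Ω × Ω => (f p.2 : ℝ≥0∞)) (hmeas.comp measurable_snd),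
        h.lintegral_snd hmeas, lintegral_const_mul' _ _ ENNReal.coe_ne_top]

theorem lintegral_le_add_mul_W1 [OpensMeasurableSpace Ω]
    [IsProbabilityMeasure μ] [IsProbabilityMeasure ν] {K : ℝ≥0} {f : Ω → ℝ≥0}
    (hf : LipschitzWith K f) : ∫⁻ z, f z ∂μ ≤ ∫⁻ z, f z ∂ν + K * W1 μ ν := by
  have : Nonempty {π // IsCoupling π μ ν} := ⟨⟨_, isCoupling_prod μ ν⟩⟩
  rw [W1_eq_iInf_isCoupling, ENNReal.mul_iInf (by simp), ENNReal.add_iInf]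
  exact le_iInf fun π => π.2.lintegral_le_add_mul_lintegral_edist hf

theorem measure_eq_of_W1_eq_zero [BorelSpace Ω] [IsProbabilityMeasure μ] [IsProbabilityMeasure ν]
    (h : W1 μ ν = 0) : μ = ν := by
  have hlintegral : ∀ {K : ℝ≥0} {f : Ω → ℝ≥0}, LipschitzWith K f →
      ∫⁻ z, f z ∂μ = ∫⁻ z, f z ∂ν := fun hf =>
    le_antisymm (by simpa [h] using lintegral_le_add_mul_W1 (μ := μ) (ν := ν) hf)
      (by simpa [W1_comm ν μ, h] using lintegral_le_add_mul_W1 (μ := ν) (ν := μ) hf)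
  have hclosed : ∀ F : Set Ω, IsClosed F → μ F = ν F := by
    intro F hF
    have hδ : ∀ n : ℕ, 0 < 1 / ((n : ℝ) + 1) := fun _ => Nat.one_div_pos_of_nat
    refine tendsto_nhds_unique (tendsto_lintegral_thickenedIndicator_of_isClosed μ hF hδ
      tendsto_one_div_add_atTop_nhds_zero_nat) ?_
    simp_rw [hlintegral (lipschitzWith_thickenedIndicator (hδ _) F)]
    exact tendsto_lintegral_thickenedIndicator_of_isClosed ν hF hδ
      tendsto_one_div_add_atTop_nhds_zero_nat
  refine ext_of_generate_finite _ ?_ isPiSystem_isClosed hclosed (hclosed _ isClosed_univ)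
  rw [BorelSpace.measurable_eq (α := Ω), borel_eq_generateFrom_isClosed]

end Wasserstein

theorem ConcaveOn.exists_nonneg_supporting_slope {ψ : ℝ → ℝ} {a b t : ℝ}
    (hconc : ConcaveOn ℝ (Set.Icc a b) ψ) (hmono : MonotoneOn ψ (Set.Icc a b))
    (hat : a < t) (htb : t ≤ b) :
    ∃ c, 0 ≤ c ∧ ∀ u ∈ Set.Icc a b, ψ u ≤ ψ t + c * (u - t) := by
  have ht : t ∈ Set.Icc a b := ⟨hat.le, htb⟩
  -- `c` is the left derivative of `ψ` at `t`, as the infimum of the left difference quotients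
  set S := (fun s => (ψ t - ψ s) / (t - s)) '' Set.Ico a t
  have hS : S.Nonempty := ⟨_, Set.mem_image_of_mem _ ⟨le_rfl, hat⟩⟩
  have hS_nonneg : ∀ q ∈ S, 0 ≤ q := by
    rintro _ ⟨s, ⟨has, hst⟩, rfl⟩
    exact div_nonneg (sub_nonneg.2 (hmono ⟨has, hst.le.trans htb⟩ ht hst.le)) (sub_nonneg.2 hst.le)
  refine ⟨sInf S, le_csInf hS hS_nonneg, fun u hu => ?_⟩
  rcases lt_trichotomy u t with hut | rfl | htu
  · have hc : sInf S ≤ (ψ t - ψ u) / (t - u) :=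
      csInf_le ⟨0, hS_nonneg⟩ ⟨u, ⟨hu.1, hut⟩, rfl⟩
    rw [le_div_iff₀ (sub_pos.2 hut)] at hc
    linarith
  · simp
  · have hc : (ψ u - ψ t) / (u - t) ≤ sInf S := by
      refine le_csInf hS ?_
      rintro _ ⟨s, ⟨has, hst⟩, rfl⟩
      exact hconc.slope_anti_adjacent ⟨has, hst.le.trans htb⟩ hu hst htu
    rw [div_le_iff₀ (sub_pos.2 htu)] at hc
    linarith

section Transport

variable {Ω : Type*} [MeasurableSpace Ω] [PseudoMetricSpace Ω] [SecondCountableTopology Ω]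
  [OpensMeasurableSpace Ω]

theorem integral_dist_eq_toReal_lintegral_edist (π : Measure (Ω × Ω)) :
    ∫ p, dist p.1 p.2 ∂π = (∫⁻ p, edist p.1 p.2 ∂π).toReal := by
  simp_rw [dist_edist]
  exact integral_toReal measurable_edist.aemeasurable (ae_of_all _ fun p => edist_lt_top _ _)

theorem integrable_dist_of_lintegral_edist_ne_top {π : Measure (Ω × Ω)}
    (h : ∫⁻ p, edist p.1 p.2 ∂π ≠ ∞) : Integrable (fun p => dist p.1 p.2) π := by
  simp_rw [dist_edist]
  exact integrable_toReal_of_lintegral_ne_top measurable_edist.aemeasurable h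

theorem opNorm_integral_sub_le_of_W1_le {μ ν : Measure Ω} [IsProbabilityMeasure μ] {m : ℕ}
    {H : Ω → Matrix (Fin m) (Fin m) ℂ}
    (hμ : ∀ i j, Integrable (fun z => H z i j) μ) (hν : ∀ i j, Integrable (fun z => H z i j) ν)
    {t a c : ℝ} (ht : 0 ≤ t) (hc : 0 ≤ c) (hW : W1 μ ν ≤ ENNReal.ofReal t)
    (hH : ∀ z w, opNorm (H z - H w) ≤ a + c * (dist z w - t)) :
    opNorm ((Matrix.of fun i j => ∫ z, H z i j ∂μ) - Matrix.of fun i j => ∫ z, H z i j ∂ν) ≤ a := by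
  have hcost : ∀ s > t, opNorm ((Matrix.of fun i j => ∫ z, H z i j ∂μ) -
      Matrix.of fun i j => ∫ z, H z i j ∂ν) ≤ a + c * (s - t) := by
    intro s hs
    obtain ⟨π, hπ, hπs⟩ := exists_isCoupling_lintegral_edist_lt
      (hW.trans_lt ((ENNReal.ofReal_lt_ofReal_iff (ht.trans_lt hs)).2 hs))
    have := hπ.isProbabilityMeasure
    have hdist : Integrable (fun p => dist p.1 p.2) π :=
      integrable_dist_of_lintegral_edist_ne_top (hπs.trans ENNReal.ofReal_lt_top).ne
    have haffine : Integrable (fun p => c * (dist p.1 p.2 - t)) π :=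
      (hdist.sub (integrable_const t)).const_mul c
    have hdist_le : ∫ p, dist p.1 p.2 ∂π ≤ s := by
      rw [integral_dist_eq_toReal_lintegral_edist]
      exact ENNReal.toReal_le_of_le_ofReal (ht.trans hs.le) hπs.le
    calc _ ≤ ∫ p, opNorm (H p.1 - H p.2) ∂π := opNorm_integral_sub_le_of_isCoupling hπ hμ hν
      _ ≤ ∫ p, (a + c * (dist p.1 p.2 - t)) ∂π :=
        integral_mono_of_nonneg (ae_of_all _ fun _ => norm_nonneg _)
          ((integrable_const a).add haffine) (ae_of_all _ fun p => hH p.1 p.2)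
      _ = a + c * (∫ p, dist p.1 p.2 ∂π - t) := by
        rw [integral_add (integrable_const a) haffine,
          integral_const_mul, integral_sub hdist (integrable_const t)]
        simp
      _ ≤ a + c * (s - t) := by gcongr
  have hlim : Tendsto (fun s => a + c * (s - t)) (𝓝[>] t) (𝓝 a) := by
    have : Continuous fun s => a + c * (s - t) := by fun_prop
    simpa using (this.tendsto t).mono_left nhdsWithin_le_nhds
  exact ge_of_tendsto hlim (eventually_nhdsWithin_of_forall hcost)

end Transport

theorem stmt9_general {m : ℕ} {Ω : Type*} [MeasurableSpace Ω] [MetricSpace Ω]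
    [PolishSpace Ω] [BorelSpace Ω]
    (P : Kernel Ω Ω) [IsMarkovKernel P]
    (κ : ℝ) (hκ0 : 0 ≤ κ) (hκ1 : κ ≤ 1)
    (hcurv : ∀ x y : Ω, W1 (P x) (P y) ≤ ENNReal.ofReal ((1 - κ) * dist x y))
    (D : ℝ) (hD : ∀ x y : Ω, dist x y ≤ D)
    (ψ : ℝ → ℝ) (hmono : MonotoneOn ψ (Set.Icc 0 D))
    (hconc : ConcaveOn ℝ (Set.Icc 0 D) ψ)
    (H : Ω → Matrix (Fin m) (Fin m) ℂ)
    (hint : ∀ x i j, Integrable (fun z => H z i j) (P x))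
    (hH : ∀ x y, opNorm (H x - H y) ≤ ψ (dist x y)) :
    ∀ x y, opNorm ((Matrix.of fun i j => ∫ z, H z i j ∂(P x)) -
        Matrix.of fun i j => ∫ z, H z i j ∂(P y)) ≤ ψ ((1 - κ) * dist x y) := by
  intro x y
  have ht0 : 0 ≤ (1 - κ) * dist x y := mul_nonneg (by linarith) dist_nonneg
  rcases ht0.eq_or_lt with ht | ht
  · have hP : P x = P y :=
      measure_eq_of_W1_eq_zero (nonpos_iff_eq_zero.1 (by simpa [← ht] using hcurv x y))
    simpa [hP, ← ht, opNorm] using hH x x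
  · have htD : (1 - κ) * dist x y ≤ D :=
      (mul_le_of_le_one_left dist_nonneg (by linarith)).trans (hD x y)
    obtain ⟨c, hc, hline⟩ := hconc.exists_nonneg_supporting_slope hmono ht htD
    exact opNorm_integral_sub_le_of_W1_le (hint x) (hint y) ht0 hc (hcurv x y) fun z w =>
      (hH z w).trans (hline _ ⟨dist_nonneg, hD z w⟩)

/-- If `P` has Ollivier curvature at least `κ` and the increments of `H` are
controlled by an increasing concave `ψ`, then the increments of `PH` are controlled
by `ψ((1−κ)·d(x,y))`. -/
theorem stmt9 {m : ℕ} {Ω : Type*} [MeasurableSpace Ω] [MetricSpace Ω]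
    [PolishSpace Ω] [BorelSpace Ω]
    (P : Kernel Ω Ω) [IsMarkovKernel P]
    (κ : ℝ) (hκ0 : 0 ≤ κ) (hκ1 : κ ≤ 1)
    (hcurv : ∀ x y : Ω, W1 (P x) (P y) ≤ ENNReal.ofReal ((1 - κ) * dist x y))
    (D : ℝ) (hD : ∀ x y : Ω, dist x y ≤ D)
    (ψ : ℝ → ℝ) (hmono : MonotoneOn ψ (Set.Icc 0 D))
    (hconc : ConcaveOn ℝ (Set.Icc 0 D) ψ)
    (hψ0 : ∀ r ∈ Set.Icc (0:ℝ) D, 0 ≤ ψ r)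
    (H : Ω → Matrix (Fin m) (Fin m) ℂ)
    (hint : ∀ x i j, Integrable (fun z => H z i j) (P x))
    (hH : ∀ x y, opNorm (H x - H y) ≤ ψ (dist x y)) :
    ∀ x y, opNorm ((Matrix.of fun i j => ∫ z, H z i j ∂(P x)) -
        Matrix.of fun i j => ∫ z, H z i j ∂(P y)) ≤ ψ ((1 - κ) * dist x y) :=
  stmt9_general P κ hκ0 hκ1 hcurv D hD ψ hmono hconc H hint hH
end

section
/- Consider the Markov chain on [0,D] given by X_{t+1} = X_t/2 + (D/2)·B_{t+1} with (B_t) i.i.d. Bernoulli(1/2), started from X_0 uniform on [0,D]. Then for every t ≥ 0, 2^t X_t / D − X_0/D is an integer almost surely; consequently, for the observable f_t(x) = (Δ/2)·cos(2π·2^t·x/D), one has f_t(X_t) = (Δ/2)·cos(2π X_0/D) almost surely, and E[f_t(X_t)] = 0. -/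
open MeasureTheory

/-- For the chain `X_{t+1} = X_t/2 + (D/2)·Bernoulli(1/2)` started uniformly on
`[0,D]`: `2^t X_t/D − X_0/D` is an integer a.s.; consequently the observable
`f_t(x) = (Δ/2) cos(2π·2^t·x/D)` satisfies `f_t(X_t) = (Δ/2) cos(2π X_0/D)` a.s.
and `E[f_t(X_t)] = 0`. -/
theorem stmt14 (D Δ : ℝ) (hD : 0 < D)
    {Ω : Type*} [MeasurableSpace Ω] (ℙ : Measure Ω) [IsProbabilityMeasure ℙ]
    (X0 : Ω → ℝ) (hX0meas : Measurable X0)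
    (hX0law : Measure.map X0 ℙ =
      ENNReal.ofReal D⁻¹ • volume.restrict (Set.Icc (0:ℝ) D))
    (B : ℕ → Ω → ℝ) (hB : ∀ t ω, B t ω = 0 ∨ B t ω = 1)
    (X : ℕ → Ω → ℝ) (hX0 : ∀ ω, X 0 ω = X0 ω)
    (hXrec : ∀ t ω, X (t + 1) ω = X t ω / 2 + D / 2 * B (t + 1) ω) :
    (∀ t : ℕ, ∀ᵐ ω ∂ℙ, ∃ z : ℤ, (2:ℝ) ^ t * X t ω / D - X0 ω / D = (z : ℝ)) ∧
    (∀ t : ℕ, ∀ᵐ ω ∂ℙ,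
      (Δ / 2) * Real.cos (2 * Real.pi * 2 ^ t * X t ω / D) =
        (Δ / 2) * Real.cos (2 * Real.pi * X0 ω / D)) ∧
    (∀ t : ℕ,
      (∫ ω, (Δ / 2) * Real.cos (2 * Real.pi * 2 ^ t * X t ω / D) ∂ℙ) = 0) := by
  have hDne : D ≠ 0 := ne_of_gt hD
  -- key deterministic fact
  have key : ∀ t ω, ∃ z : ℤ, (2:ℝ) ^ t * X t ω = X0 ω + (z : ℝ) * D := by
    intro t
    induction t with
    | zero => intro ω; exact ⟨0, by simp [hX0 ω]⟩
    | succ t ih =>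
      intro ω
      obtain ⟨z, hz⟩ := ih ω
      rcases hB (t + 1) ω with hb | hb
      · exact ⟨z, by rw [hXrec t ω, hb]; push_cast; ring_nf; ring_nf at hz; linarith⟩
      · refine ⟨z + 2 ^ t, ?_⟩
        rw [hXrec t ω, hb]; push_cast; ring_nf; ring_nf at hz; linarith
  have key2 : ∀ t ω, ∃ z : ℤ, (2:ℝ) ^ t * X t ω / D - X0 ω / D = (z : ℝ) := by
    intro t ω
    obtain ⟨z, hz⟩ := key t ω
    exact ⟨z, by rw [hz]; field_simp; ring⟩
  have keycos : ∀ t ω,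
      Real.cos (2 * Real.pi * 2 ^ t * X t ω / D) = Real.cos (2 * Real.pi * X0 ω / D) := by
    intro t ω
    obtain ⟨z, hz⟩ := key t ω
    have : 2 * Real.pi * 2 ^ t * X t ω / D = 2 * Real.pi * X0 ω / D + z * (2 * Real.pi) := by
      have h2 : 2 * Real.pi * 2 ^ t * X t ω / D = 2 * Real.pi * ((2:ℝ) ^ t * X t ω) / D := by
        ring
      rw [h2, hz]; field_simp
    rw [this, Real.cos_add_int_mul_two_pi]
  refine ⟨fun t => Filter.Eventually.of_forall (key2 t),
    fun t => Filter.Eventually.of_forall (fun ω => by rw [keycos t ω]), fun t => ?_⟩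
  have hcongr : (∫ ω, (Δ / 2) * Real.cos (2 * Real.pi * 2 ^ t * X t ω / D) ∂ℙ)
      = ∫ ω, (Δ / 2) * Real.cos (2 * Real.pi * X0 ω / D) ∂ℙ := by
    congr 1; funext ω; rw [keycos t ω]
  rw [hcongr]
  have hg : ∫ ω, (Δ / 2) * Real.cos (2 * Real.pi * X0 ω / D) ∂ℙ
      = ∫ x, (Δ / 2) * Real.cos (2 * Real.pi * x / D) ∂(Measure.map X0 ℙ) := by
    rw [integral_map hX0meas.aemeasurable]
    exact (Continuous.aestronglyMeasurable (by continuity))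
  rw [hg, hX0law, integral_smul_measure]
  have hIcc : ∫ x in Set.Icc (0:ℝ) D, (Δ / 2) * Real.cos (2 * Real.pi * x / D)
      = ∫ x in (0:ℝ)..D, (Δ / 2) * Real.cos (2 * Real.pi * x / D) := by
    rw [intervalIntegral.integral_of_le hD.le, integral_Icc_eq_integral_Ioc]
  rw [hIcc]
  have hint : ∫ x in (0:ℝ)..D, (Δ / 2) * Real.cos (2 * Real.pi * x / D) = 0 := by
    have heq : ∀ x : ℝ, (Δ / 2) * Real.cos (2 * Real.pi * x / D)
        = (Δ / 2) * Real.cos ((2 * Real.pi / D) * x) := by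
      intro x; ring_nf
    simp_rw [heq]
    rw [intervalIntegral.integral_const_mul, intervalIntegral.integral_comp_mul_left
      (fun y => Real.cos y) (by positivity : (2 * Real.pi / D) ≠ 0)]
    rw [mul_zero, integral_cos, Real.sin_zero]
    have h3 : 2 * Real.pi / D * D = 2 * Real.pi := by field_simp
    rw [h3, Real.sin_two_pi]
    simp
  rw [hint]
  simp
end

section
/- Let (a_t)_{t≥1} and (b_t)_{t≥1} be defined by a_t = Σ_{k=1}^t Π_{ℓ=k}^t u_ℓ and b_t = Σ_{i=1}^t r^{i−1} Π_{ℓ=t−i+2}^t u_ℓ, where u_ℓ ∈ [0,1] and r ≥ 1 (empty products equal 1), so that a_t = u_t(1+a_{t−1}) and b_t = 1 + r·u_t·b_{t−1} for t > 1. If (r−1)·a_t ≤ 1/3 for all t ≥ 1, then b_t ≤ (3/2)(1 + a_t) for all t ≥ 1. -/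
/-- Induction step in the tilted-renewal bound: given the recursions
`a_t = u_t(1+a_{t−1})`, `b_t = 1 + r u_t b_{t−1}` with `u_ℓ ∈ [0,1]`, `r ≥ 1`,
if `(r−1) a_t ≤ 1/3` for all `t ≥ 1` then `b_t ≤ (3/2)(1 + a_t)` for all `t ≥ 1`. -/
theorem stmt17 (u a b : ℕ → ℝ) (r : ℝ)
    (hu : ∀ ℓ, u ℓ ∈ Set.Icc (0:ℝ) 1) (hr : 1 ≤ r)
    (ha1 : a 1 = u 1) (hb1 : b 1 = 1)
    (harec : ∀ t, 1 < t → a t = u t * (1 + a (t - 1)))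
    (hbrec : ∀ t, 1 < t → b t = 1 + r * u t * b (t - 1))
    (hsmall : ∀ t, 1 ≤ t → (r - 1) * a t ≤ 1 / 3) :
    ∀ t, 1 ≤ t → b t ≤ (3 / 2) * (1 + a t) := by
  -- First: a t ≥ 0 for t ≥ 1
  have hanneg : ∀ t, 1 ≤ t → 0 ≤ a t := by
    intro t
    induction t with
    | zero => intro h; omega
    | succ n ih =>
      intro _
      rcases Nat.eq_or_lt_of_le (Nat.one_le_iff_ne_zero.mpr (Nat.succ_ne_zero n)) with h | h
      · have hn0 : n = 0 := by omega
        subst hn0; rw [show (0:ℕ)+1 = 1 from rfl, ha1]; exact (hu 1).1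
      · rw [harec _ h]
        have hn : 1 ≤ n := by omega
        have := ih hn
        have hsub : n + 1 - 1 = n := rfl
        rw [hsub]
        have := (hu (n+1)).1
        nlinarith
  intro t
  induction t with
  | zero => intro h; omega
  | succ n ih =>
    intro _
    rcases Nat.eq_or_lt_of_le (Nat.one_le_iff_ne_zero.mpr (Nat.succ_ne_zero n)) with h | h
    · have hn0 : n = 0 := by omega
      subst hn0
      rw [show (0:ℕ)+1 = 1 from rfl, hb1, ha1]
      have := (hu 1).1
      linarith
    · have hn : 1 ≤ n := by omega
      have hb := hbrec _ h
      have ha := harec _ h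
      have hsub : n + 1 - 1 = n := rfl
      rw [hsub] at hb ha
      have hu0 := (hu (n+1)).1
      have hru : 0 ≤ r * u (n+1) := mul_nonneg (by linarith) hu0
      have hIH := ih hn
      have h1 : b (n+1) ≤ 1 + r * u (n+1) * ((3/2) * (1 + a n)) := by
        rw [hb]
        have := mul_le_mul_of_nonneg_left hIH hru
        linarith
      have hs := hsmall (n+1) (by omega)
      have hat : a (n+1) = u (n+1) * (1 + a n) := ha
      have han : 0 ≤ a n := hanneg n hn
      nlinarith [hs, hat, han]
end
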